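/- arXiv:2305.19876 — 3 statements merged into one kernel-verified Lean document; each statement's English description precedes it below -/
import Mathlib

section
/- If vertex i is ρ̃-recurrent for some density ρ̃ on the finite-dimensional space h_i, then i is ρ-recurrent for every faithful (strictly positive definite) density ρ on h_i. -/
/-!
A faithful `ρ` dominates a multiple of any density: `α • σ ≤ ρ` for some `α > 0`, since `ρ`
is bounded below by a positive multiple of the identity and `σ` above by `‖σ‖`. The map
`ρ ↦ p_{ii;ρ}(t)` is real-linear and, the semigroup being positive, monotone for the Loewner
order, so `α p_{ii;σ} ≤ p_{ii;ρ}` pointwise and the divergence of `∫ p_{ii;σ}` forces that of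
`∫ p_{ii;ρ}`.
-/

open Matrix MeasureTheory ComplexOrder

/-- Embedding of an internal-state operator `ρ` at site `i` of the direct sum
`H = ⊕_{i ∈ V} h_i` (semifinite CTOQW with `h_i = ℂ^d`): this is `ρ ⊗ |i⟩⟨i|`. -/
def siteEmbed {V : Type*} [DecidableEq V] {d : ℕ} (i : V)
    (ρ : Matrix (Fin d) (Fin d) ℂ) : Matrix (V × Fin d) (V × Fin d) ℂ :=
  fun a b => if a.1 = i ∧ b.1 = i then ρ a.2 b.2 else 0

/-- The projection `P_k = I ⊗ |k⟩⟨k|` onto the block of site `k`. -/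
def siteProj {V : Type*} [DecidableEq V] (d : ℕ) (k : V) :
    Matrix (V × Fin d) (V × Fin d) ℂ :=
  Matrix.diagonal fun x => if x.1 = k then 1 else 0

/-- The `k`-th diagonal block of an operator on `⊕_{i ∈ V} ℂ^d`. -/
def siteBlock {V : Type*} {d : ℕ} (k : V) (X : Matrix (V × Fin d) (V × Fin d) ℂ) :
    Matrix (Fin d) (Fin d) ℂ :=
  fun x y => X (k, x) (k, y)

/-- Transition probability `p_{ji;ρ}(t) = Tr(e^{tL}(ρ ⊗ |i⟩⟨i|)(I ⊗ |j⟩⟨j|))` of a CTOQW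
whose semigroup `e^{tL}` is given by `T`. -/
noncomputable def transP {V : Type*} [Fintype V] [DecidableEq V] {d : ℕ}
    (T : ℝ → Matrix (V × Fin d) (V × Fin d) ℂ →ₗ[ℂ] Matrix (V × Fin d) (V × Fin d) ℂ)
    (j i : V) (ρ : Matrix (Fin d) (Fin d) ℂ) (t : ℝ) : ℝ :=
  ((T t (siteEmbed i ρ) * siteProj d j).trace).re

theorem IsStrictlyPositive.exists_pos_smul_le {A : Type*} [CStarAlgebra A] [PartialOrder A]
    [StarOrderedRing A] {a b : A} (ha : IsStrictlyPositive a) (hb : IsSelfAdjoint b) :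
    ∃ c : ℝ, 0 < c ∧ c • b ≤ a := by
  cases subsingleton_or_nontrivial A
  · exact ⟨1, one_pos, (Subsingleton.elim _ _).le⟩
  obtain ⟨r, hr, hra⟩ : ∃ r > 0, algebraMap ℝ A r ≤ a :=
    (CFC.exists_pos_algebraMap_le_iff ha.isSelfAdjoint).2 fun x hx ↦ ha.spectrum_pos hx
  refine ⟨r / (‖b‖ + 1), by positivity, ?_⟩
  calc (r / (‖b‖ + 1)) • b ≤ (r / (‖b‖ + 1)) • algebraMap ℝ A (‖b‖ + 1) := by
        gcongr
        exact hb.le_algebraMap_norm_self.trans (by gcongr; linarith)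
    _ = algebraMap ℝ A r := by
        rw [Algebra.smul_def, ← map_mul, div_mul_cancel₀ _ (by positivity)]
    _ ≤ a := hra

open scoped Kronecker in
theorem Matrix.kronecker_sub {α l m n p : Type*} [NonUnitalNonAssocRing α] (A : Matrix l m α)
    (B₁ B₂ : Matrix n p α) : A ⊗ₖ (B₁ - B₂) = A ⊗ₖ B₁ - A ⊗ₖ B₂ := by
  ext
  simp [mul_sub]

open scoped MatrixOrder Matrix.Norms.L2Operator in
theorem Matrix.PosSemidef.trace_mul_nonneg {𝕜 n : Type*} [RCLike 𝕜] [Fintype n]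
    {A B : Matrix n n 𝕜} (hA : A.PosSemidef) (hB : B.PosSemidef) : 0 ≤ (A * B).trace := by
  classical
  obtain ⟨C, rfl⟩ := CStarAlgebra.nonneg_iff_eq_star_mul_self.mp hB.nonneg
  rw [← mul_assoc, trace_mul_comm, ← mul_assoc]
  exact (hA.mul_mul_conjTranspose_same C).trace_nonneg

open scoped MatrixOrder Matrix.Norms.L2Operator in
theorem Matrix.PosDef.exists_pos_posSemidef_sub_smul {n : Type*} [Fintype n] [DecidableEq n]
    {ρ σ : Matrix n n ℂ} (hρ : ρ.PosDef) (hσ : σ.IsHermitian) :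
    ∃ c : ℝ, 0 < c ∧ (ρ - c • σ).PosSemidef :=
  hρ.isStrictlyPositive.exists_pos_smul_le hσ

theorem MeasureTheory.lintegral_ofReal_eq_top_of_const_mul_le {α : Type*} [MeasurableSpace α]
    {μ : Measure α} {f g : α → ℝ} {c : ℝ} (hc : 0 < c) (hgf : ∀ᵐ x ∂μ, c * g x ≤ f x)
    (hg : ∫⁻ x, ENNReal.ofReal (g x) ∂μ = ⊤) : ∫⁻ x, ENNReal.ofReal (f x) ∂μ = ⊤ := by
  refine eq_top_iff.2 ?_
  calc ⊤ = ENNReal.ofReal c * ∫⁻ x, ENNReal.ofReal (g x) ∂μ := by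
        rw [hg, ENNReal.mul_top (by simpa using hc)]
    _ = ∫⁻ x, ENNReal.ofReal (c * g x) ∂μ := by
        rw [← lintegral_const_mul' _ _ ENNReal.ofReal_ne_top]
        simp_rw [ENNReal.ofReal_mul hc.le]
    _ ≤ ∫⁻ x, ENNReal.ofReal (f x) ∂μ :=
        lintegral_mono_ae <| hgf.mono fun x hx ↦ ENNReal.ofReal_le_ofReal hx

open scoped Kronecker in
theorem siteEmbed_eq_kronecker {V : Type*} [DecidableEq V] {d : ℕ} (i : V)
    (ρ : Matrix (Fin d) (Fin d) ℂ) : siteEmbed i ρ = single i i 1 ⊗ₖ ρ := by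
  ext ⟨a, p⟩ ⟨b, q⟩
  simp only [siteEmbed, kronecker_apply, single_apply]
  grind

theorem siteEmbed_posSemidef {V : Type*} [Fintype V] [DecidableEq V] {d : ℕ} (i : V)
    {ρ : Matrix (Fin d) (Fin d) ℂ} (hρ : ρ.PosSemidef) : (siteEmbed i ρ).PosSemidef := by
  rw [siteEmbed_eq_kronecker, ← diagonal_single]
  exact (PosSemidef.diagonal (Pi.single_nonneg.2 zero_le_one)).kronecker hρ

theorem siteProj_posSemidef {V : Type*} [DecidableEq V] (d : ℕ) (k : V) :
    (siteProj d k).PosSemidef :=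
  posSemidef_diagonal_iff.2 fun x => by split_ifs <;> simp

section transP

variable {V : Type*} [Fintype V] [DecidableEq V] {d : ℕ}
  (T : ℝ → Matrix (V × Fin d) (V × Fin d) ℂ →ₗ[ℂ] Matrix (V × Fin d) (V × Fin d) ℂ)
  (j i : V) (ρ σ : Matrix (Fin d) (Fin d) ℂ) (t : ℝ)

theorem transP_sub : transP T j i (ρ - σ) t = transP T j i ρ t - transP T j i σ t := by
  simp only [transP, siteEmbed_eq_kronecker, kronecker_sub, map_sub, sub_mul, trace_sub,
    Complex.sub_re]

theorem transP_real_smul (c : ℝ) : transP T j i (c • ρ) t = c * transP T j i ρ t := by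
  simp only [transP, siteEmbed_eq_kronecker, kronecker_smul, LinearMap.map_smul_of_tower,
    smul_mul_assoc, trace_smul, Complex.smul_re, smul_eq_mul]

variable {T ρ t}

theorem transP_nonneg (hTpos : ∀ t : ℝ, 0 ≤ t → ∀ X, X.PosSemidef → (T t X).PosSemidef)
    (hρ : ρ.PosSemidef) (ht : 0 ≤ t) : 0 ≤ transP T j i ρ t :=
  (Complex.nonneg_iff.1 <| (hTpos t ht _ (siteEmbed_posSemidef i hρ)).trace_mul_nonneg
    (siteProj_posSemidef d j)).1

end transP

theorem ctoqw_faithful_recurrent_general {V : Type*} [Fintype V] [DecidableEq V] {d : ℕ}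
    (T : ℝ → Matrix (V × Fin d) (V × Fin d) ℂ →ₗ[ℂ] Matrix (V × Fin d) (V × Fin d) ℂ)
    (hTpos : ∀ t : ℝ, 0 ≤ t → ∀ X, X.PosSemidef → (T t X).PosSemidef)
    (i : V) (σ : Matrix (Fin d) (Fin d) ℂ) (hσ : σ.PosSemidef)
    (hrec : (∫⁻ t in Set.Ici (0 : ℝ), ENNReal.ofReal (transP T i i σ t)) = ⊤)
    (ρ : Matrix (Fin d) (Fin d) ℂ) (hρ : ρ.PosDef) :
    (∫⁻ t in Set.Ici (0 : ℝ), ENNReal.ofReal (transP T i i ρ t)) = ⊤ := by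
  obtain ⟨α, hα, hρσ⟩ := hρ.exists_pos_posSemidef_sub_smul hσ.isHermitian
  have hpt : ∀ t ∈ Set.Ici (0 : ℝ), α * transP T i i σ t ≤ transP T i i ρ t := fun t ht ↦ by
    have hgap := transP_nonneg i i hTpos hρσ ht
    rw [transP_sub, transP_real_smul] at hgap
    linarith
  exact lintegral_ofReal_eq_top_of_const_mul_le hα
    (ae_restrict_of_forall_mem measurableSet_Ici hpt) hrec

/-- If the vertex `i` is `σ`-recurrent for some density `σ` on the finite-dimensional
internal space, then `i` is `ρ`-recurrent for every faithful (positive definite)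
density `ρ`. -/
theorem ctoqw_faithful_recurrent {V : Type*} [Fintype V] [DecidableEq V] {d : ℕ}
    (T : ℝ → Matrix (V × Fin d) (V × Fin d) ℂ →ₗ[ℂ] Matrix (V × Fin d) (V × Fin d) ℂ)
    (hT0 : T 0 = LinearMap.id)
    (hTsemi : ∀ s t : ℝ, 0 ≤ s → 0 ≤ t → T (s + t) = (T s).comp (T t))
    (hTpos : ∀ t : ℝ, 0 ≤ t → ∀ X, X.PosSemidef → (T t X).PosSemidef)
    (hTtr : ∀ t : ℝ, 0 ≤ t → ∀ X, (T t X).trace = X.trace)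
    (hTcont : ∀ X, Continuous fun t => T t X)
    (i : V) (σ : Matrix (Fin d) (Fin d) ℂ) (hσ : σ.PosSemidef) (hσ1 : σ.trace = 1)
    (hrec : (∫⁻ t in Set.Ici (0 : ℝ), ENNReal.ofReal (transP T i i σ t)) = ⊤)
    (ρ : Matrix (Fin d) (Fin d) ℂ) (hρ : ρ.PosDef) (hρ1 : ρ.trace = 1) :
    (∫⁻ t in Set.Ici (0 : ℝ), ENNReal.ofReal (transP T i i ρ t)) = ⊤ :=
  ctoqw_faithful_recurrent_general T hTpos i σ hσ hrec ρ hρ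
end

section
/- For a CTOQW induced by a coin (C,A)_H of dimension 2, if the auxiliary Lindblad operator L(ρ) = -i[H,ρ] - (1/2){C*C + A*A, ρ} + CρC* + AρA* has two distinct stationary density matrices, then C and A share two orthogonal eigenvectors (are simultaneously diagonalizable in an orthonormal basis of ℂ²). -/
/-!
The difference `δ = ρ₁ - ρ₂` is a nonzero traceless hermitian matrix with `L δ = 0`, so in an
orthonormal eigenbasis of `δ` it becomes `diag(t, -t)` with `t ≠ 0`. Conjugation by a unitary
commutes with `L` (it is a ⋆-algebra automorphism), and in the new basis the `(1,1)` entry of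
`L (diag(t, -t))` is `t (|C₀₁|² + |C₁₀|² + |A₀₁|² + |A₁₀|²)`. Hence `C` and `A` are diagonal in
the eigenbasis of `δ`, whose two vectors are the required common orthogonal eigenvectors.
-/

open Matrix ComplexOrder Unitary

section Lindblad

variable {R S : Type*} [Ring R] [StarRing R] [Algebra ℂ R] [Ring S] [StarRing S] [Algebra ℂ S]

noncomputable def lindblad (H C A X : R) : R :=
  -(Complex.I • (H * X - X * H)) -
    (1 / 2 : ℂ) • ((star C * C + star A * A) * X + X * (star C * C + star A * A)) +
    C * X * star C + A * X * star A

theorem lindblad_sub (H C A X Y : R) :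
    lindblad H C A (X - Y) = lindblad H C A X - lindblad H C A Y := by
  simp only [lindblad, mul_sub, sub_mul, smul_sub, smul_add, neg_sub]
  abel

theorem map_lindblad {F : Type*} [FunLike F R S] [AlgHomClass F ℂ R S]
    [StarHomClass F R S] (φ : F) (H C A X : R) :
    φ (lindblad H C A X) = lindblad (φ H) (φ C) (φ A) (φ X) := by
  simp only [lindblad, map_add, map_sub, map_neg, map_smul, map_mul, map_star]

end Lindblad

namespace Matrix

variable {n α : Type*} [Fintype n] [DecidableEq n] [CommRing α] [StarRing α]

theorem star_col_dotProduct_col_of_mem_unitaryGroup (U : unitaryGroup n α) (i j : n) :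
    star ((U : Matrix n n α).col i) ⬝ᵥ (U : Matrix n n α).col j = (1 : Matrix n n α) i j := by
  rw [← coe_star_mul_self U, mul_apply]
  rfl

theorem col_ne_zero_of_mem_unitaryGroup [Nontrivial α] (U : unitaryGroup n α) (i : n) :
    (U : Matrix n n α).col i ≠ 0 := by
  intro h
  have := star_col_dotProduct_col_of_mem_unitaryGroup U i i
  rw [h, dotProduct_zero, one_apply_eq] at this
  exact zero_ne_one this

theorem mulVec_col_of_isDiag_conjStarAlgAut_star {U : unitaryGroup n α} {M : Matrix n n α}
    (h : (conjStarAlgAut α _ (star U) M).IsDiag) (i : n) :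
    M *ᵥ (U : Matrix n n α).col i =
      conjStarAlgAut α _ (star U) M i i • (U : Matrix n n α).col i := by
  set M' := conjStarAlgAut α _ (star U) M with hM'
  have hMU : M * U = U * M' := by
    rw [hM', conjStarAlgAut_star_apply, ← mul_assoc, ← mul_assoc, mul_star_self_of_mem U.2,
      one_mul]
  ext j
  calc (M *ᵥ (U : Matrix n n α).col i) j = (M * U) j i := rfl
    _ = (U * M') j i := by rw [hMU]
    _ = U j i * M' i i := Finset.sum_eq_single i (fun k _ hk => by simp [h hk]) (by simp)
    _ = (M' i i • (U : Matrix n n α).col i) j := mul_comm _ _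

theorem IsHermitian.exists_conjStarAlgAut_eq_diagonal_neg_of_trace_eq_zero
    {δ : Matrix (Fin 2) (Fin 2) ℂ} (hδ : δ.IsHermitian) (htr : δ.trace = 0) (hne : δ ≠ 0) :
    ∃ U : unitaryGroup (Fin 2) ℂ, ∃ t : ℝ, t ≠ 0 ∧
      conjStarAlgAut ℂ _ (star U) δ = diagonal ![(t : ℂ), -t] := by
  have hsum : hδ.eigenvalues 0 + hδ.eigenvalues 1 = 0 := by
    have := congrArg Complex.re (hδ.trace_eq_sum_eigenvalues.symm.trans htr)
    simpa [Fin.sum_univ_two] using this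
  have h1 : hδ.eigenvalues 1 = -hδ.eigenvalues 0 := by linarith
  refine ⟨hδ.eigenvectorUnitary, hδ.eigenvalues 0, fun h0 => hne ?_, ?_⟩
  · rw [← hδ.eigenvalues_eq_zero_iff]
    ext i
    fin_cases i <;> simp [h0, h1]
  · rw [hδ.conjStarAlgAut_star_eigenvectorUnitary]
    congr 1
    ext i
    fin_cases i <;> simp [h1]

end Matrix

theorem lindblad_diagonal_apply_one_one (H C A : Matrix (Fin 2) (Fin 2) ℂ) (t : ℝ) :
    lindblad H C A (diagonal ![(t : ℂ), -t]) 1 1 =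
      t * (Complex.normSq (C 0 1) + Complex.normSq (C 1 0) +
        Complex.normSq (A 0 1) + Complex.normSq (A 1 0) : ℝ) := by
  simp only [lindblad, Matrix.add_apply, Matrix.sub_apply, Matrix.neg_apply, Matrix.smul_apply,
    mul_apply, star_apply, Fin.sum_univ_two, diagonal_apply, smul_eq_mul, RCLike.star_def,
    Complex.ofReal_add, Complex.normSq_eq_conj_mul_self, zero_ne_one, one_ne_zero, if_true,
    if_false, cons_val_zero, cons_val_one, cons_val_fin_one]
  ring

theorem isDiag_of_lindblad_diagonal_eq_zero {H C A : Matrix (Fin 2) (Fin 2) ℂ} {t : ℝ}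
    (ht : t ≠ 0) (h : lindblad H C A (diagonal ![(t : ℂ), -t]) = 0) : C.IsDiag ∧ A.IsDiag := by
  have h11 := congr_fun₂ h 1 1
  rw [lindblad_diagonal_apply_one_one, Matrix.zero_apply, ← Complex.ofReal_mul,
    Complex.ofReal_eq_zero, mul_eq_zero] at h11
  have hsum := h11.resolve_left ht
  have hoff : ∀ z ∈ [C 0 1, C 1 0, A 0 1, A 1 0], z = 0 := by
    simp only [List.mem_cons, List.not_mem_nil, or_false, forall_eq_or_imp, forall_eq,
      ← Complex.normSq_eq_zero]
    refine ⟨?_, ?_, ?_, ?_⟩ <;>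
      linarith [Complex.normSq_nonneg (C 0 1), Complex.normSq_nonneg (C 1 0),
        Complex.normSq_nonneg (A 0 1), Complex.normSq_nonneg (A 1 0)]
  refine ⟨fun i j hij => ?_, fun i j hij => ?_⟩ <;> fin_cases i <;> fin_cases j <;>
    first | exact (hij rfl).elim | exact hoff _ (by simp)

theorem coin_two_stationary_states_simultaneously_diagonalizable_general
    (C A H : Matrix (Fin 2) (Fin 2) ℂ)
    (L : Matrix (Fin 2) (Fin 2) ℂ → Matrix (Fin 2) (Fin 2) ℂ)
    (hL : ∀ ρ, L ρ =
      -(Complex.I • (H * ρ - ρ * H)) -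
        (1 / 2 : ℂ) • ((Cᴴ * C + Aᴴ * A) * ρ + ρ * (Cᴴ * C + Aᴴ * A)) +
        C * ρ * Cᴴ + A * ρ * Aᴴ)
    (ρ₁ ρ₂ : Matrix (Fin 2) (Fin 2) ℂ)
    (hρ₁ : ρ₁.PosSemidef) (hρ₁1 : ρ₁.trace = 1) (hρ₁L : L ρ₁ = 0)
    (hρ₂ : ρ₂.PosSemidef) (hρ₂1 : ρ₂.trace = 1) (hρ₂L : L ρ₂ = 0)
    (hne : ρ₁ ≠ ρ₂) :
    ∃ u v : Fin 2 → ℂ, u ≠ 0 ∧ v ≠ 0 ∧ (∑ x, star (u x) * v x) = 0 ∧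
      (∃ c₁ : ℂ, C.mulVec u = c₁ • u) ∧ (∃ c₂ : ℂ, C.mulVec v = c₂ • v) ∧
      (∃ a₁ : ℂ, A.mulVec u = a₁ • u) ∧ (∃ a₂ : ℂ, A.mulVec v = a₂ • v) := by
  obtain rfl : L = lindblad H C A := funext hL
  have hδ : lindblad H C A (ρ₁ - ρ₂) = 0 := by rw [lindblad_sub, hρ₁L, hρ₂L, sub_self]
  obtain ⟨U, t, ht, hU⟩ :=
    (hρ₁.1.sub hρ₂.1).exists_conjStarAlgAut_eq_diagonal_neg_of_trace_eq_zero
    (by rw [trace_sub, hρ₁1, hρ₂1, sub_self]) (sub_ne_zero.mpr hne)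
  have hconj := map_lindblad (conjStarAlgAut ℂ _ (star U)) H C A (ρ₁ - ρ₂)
  rw [hδ, map_zero, hU] at hconj
  have hdiag := isDiag_of_lindblad_diagonal_eq_zero ht hconj.symm
  exact ⟨_, _, col_ne_zero_of_mem_unitaryGroup U 0, col_ne_zero_of_mem_unitaryGroup U 1,
    star_col_dotProduct_col_of_mem_unitaryGroup U 0 1,
    ⟨_, mulVec_col_of_isDiag_conjStarAlgAut_star hdiag.1 0⟩,
    ⟨_, mulVec_col_of_isDiag_conjStarAlgAut_star hdiag.1 1⟩,
    ⟨_, mulVec_col_of_isDiag_conjStarAlgAut_star hdiag.2 0⟩,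
    ⟨_, mulVec_col_of_isDiag_conjStarAlgAut_star hdiag.2 1⟩⟩

/-- For a CTOQW induced by a coin `(C,A)_H` of dimension 2: if the auxiliary Lindblad
operator `L(ρ) = -i[H,ρ] - (1/2){C*C + A*A, ρ} + CρC* + AρA*` admits two distinct
stationary density matrices, then `C` and `A` share two orthogonal eigenvectors
(they are simultaneously diagonalizable in an orthonormal basis of `ℂ²`). -/
theorem coin_two_stationary_states_simultaneously_diagonalizable
    (C A H : Matrix (Fin 2) (Fin 2) ℂ) (hH : H.IsHermitian)
    (L : Matrix (Fin 2) (Fin 2) ℂ → Matrix (Fin 2) (Fin 2) ℂ)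
    (hL : ∀ ρ, L ρ =
      -(Complex.I • (H * ρ - ρ * H)) -
        (1 / 2 : ℂ) • ((Cᴴ * C + Aᴴ * A) * ρ + ρ * (Cᴴ * C + Aᴴ * A)) +
        C * ρ * Cᴴ + A * ρ * Aᴴ)
    (ρ₁ ρ₂ : Matrix (Fin 2) (Fin 2) ℂ)
    (hρ₁ : ρ₁.PosSemidef) (hρ₁1 : ρ₁.trace = 1) (hρ₁L : L ρ₁ = 0)
    (hρ₂ : ρ₂.PosSemidef) (hρ₂1 : ρ₂.trace = 1) (hρ₂L : L ρ₂ = 0)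
    (hne : ρ₁ ≠ ρ₂) :
    ∃ u v : Fin 2 → ℂ, u ≠ 0 ∧ v ≠ 0 ∧ (∑ x, star (u x) * v x) = 0 ∧
      (∃ c₁ : ℂ, C.mulVec u = c₁ • u) ∧ (∃ c₂ : ℂ, C.mulVec v = c₂ • v) ∧
      (∃ a₁ : ℂ, A.mulVec u = a₁ • u) ∧ (∃ a₂ : ℂ, A.mulVec v = a₂ • v) :=
  coin_two_stationary_states_simultaneously_diagonalizable_general C A H L hL ρ₁ ρ₂ hρ₁ hρ₁1 hρ₁L
    hρ₂ hρ₂1 hρ₂L hne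
end

section
/- Let C = diag(c₁,c₂), A = diag(a₁,a₂) and H = [[h₁, h₂],[conj(h₂), h₃]] with h₂ ≠ 0 and h₁,h₃ ∈ ℝ. If the auxiliary Lindblad operator L(ρ) = -i[H,ρ] - (1/2){C*C+A*A, ρ} + CρC* + AρA* admits two distinct stationary density matrices, then a₁ = a₂ and c₁ = c₂ (so A and C are scalar multiples of the identity). -/
open Matrix ComplexOrder

/-- If `C = diag(c₁,c₂)`, `A = diag(a₁,a₂)` and `H = [[h₁,h₂],[conj h₂,h₃]]` with
`h₂ ≠ 0`, `h₁, h₃ ∈ ℝ`, and the auxiliary Lindblad operator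
`L(ρ) = -i[H,ρ] - (1/2){C*C + A*A, ρ} + CρC* + AρA*` admits two distinct stationary
density matrices, then `a₁ = a₂` and `c₁ = c₂`. -/
theorem coin_offdiag_hamiltonian_two_stationary_states_scalar
    (c₁ c₂ a₁ a₂ : ℂ) (h₁ h₃ : ℝ) (h₂ : ℂ) (hh₂ : h₂ ≠ 0)
    (C A H : Matrix (Fin 2) (Fin 2) ℂ)
    (hC : C = Matrix.diagonal ![c₁, c₂])
    (hA : A = Matrix.diagonal ![a₁, a₂])
    (hHdef : H = !![(h₁ : ℂ), h₂; (starRingEnd ℂ) h₂, (h₃ : ℂ)])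
    (L : Matrix (Fin 2) (Fin 2) ℂ → Matrix (Fin 2) (Fin 2) ℂ)
    (hL : ∀ ρ, L ρ =
      -(Complex.I • (H * ρ - ρ * H)) -
        (1 / 2 : ℂ) • ((Cᴴ * C + Aᴴ * A) * ρ + ρ * (Cᴴ * C + Aᴴ * A)) +
        C * ρ * Cᴴ + A * ρ * Aᴴ)
    (ρ₁ ρ₂ : Matrix (Fin 2) (Fin 2) ℂ)
    (hρ₁ : ρ₁.PosSemidef) (hρ₁1 : ρ₁.trace = 1) (hρ₁L : L ρ₁ = 0)
    (hρ₂ : ρ₂.PosSemidef) (hρ₂1 : ρ₂.trace = 1) (hρ₂L : L ρ₂ = 0)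
    (hne : ρ₁ ≠ ρ₂) :
    a₁ = a₂ ∧ c₁ = c₂ := by
  have key : ∀ ρ : Matrix (Fin 2) (Fin 2) ℂ, L ρ = 0 → ∀ i j,
      (-(Complex.I • (H * ρ - ρ * H)) -
        (1 / 2 : ℂ) • ((Cᴴ * C + Aᴴ * A) * ρ + ρ * (Cᴴ * C + Aᴴ * A)) +
        C * ρ * Cᴴ + A * ρ * Aᴴ) i j = 0 := by
    intro ρ h i j; rw [← hL, h]; simp
  have e00₁ := key ρ₁ hρ₁L 0 0
  have e01₁ := key ρ₁ hρ₁L 0 1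
  have e00₂ := key ρ₂ hρ₂L 0 0
  have e01₂ := key ρ₂ hρ₂L 0 1
  simp [hC, hA, hHdef, Matrix.mul_apply, Fin.sum_univ_two, Matrix.sub_apply, Matrix.add_apply,
    Matrix.smul_apply, Matrix.neg_apply, Matrix.conjTranspose_apply, Matrix.diagonal_apply,
    Matrix.vecMul, dotProduct, Matrix.vecHead, Matrix.vecTail] at e00₁ e01₁ e00₂ e01₂
  -- hermiticity and reality of diagonal
  have herm₁ : ρ₁ 1 0 = (starRingEnd ℂ) (ρ₁ 0 1) := by
    have := congrFun (congrFun hρ₁.1 1) 0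
    rw [Matrix.conjTranspose_apply] at this
    exact this.symm
  have herm₂ : ρ₂ 1 0 = (starRingEnd ℂ) (ρ₂ 0 1) := by
    have := congrFun (congrFun hρ₂.1 1) 0
    rw [Matrix.conjTranspose_apply] at this
    exact this.symm
  have hre₁ : (starRingEnd ℂ) (ρ₁ 0 0) = ρ₁ 0 0 := by
    have := congrFun (congrFun hρ₁.1 0) 0
    rw [Matrix.conjTranspose_apply] at this
    exact this
  have hre₂ : (starRingEnd ℂ) (ρ₂ 0 0) = ρ₂ 0 0 := by
    have := congrFun (congrFun hρ₂.1 0) 0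
    rw [Matrix.conjTranspose_apply] at this
    exact this
  rw [Matrix.trace_fin_two] at hρ₁1 hρ₂1
  rw [herm₁] at e00₁
  rw [herm₂] at e00₂
  have q₁ : ρ₁ 1 1 = 1 - ρ₁ 0 0 := by linear_combination hρ₁1
  have q₂ : ρ₂ 1 1 = 1 - ρ₂ 0 0 := by linear_combination hρ₂1
  rw [q₁] at e01₁
  rw [q₂] at e01₂
  -- difference equations
  have EqA : h₂ * ((starRingEnd ℂ) (ρ₁ 0 1) - (starRingEnd ℂ) (ρ₂ 0 1)) -
      (starRingEnd ℂ) h₂ * (ρ₁ 0 1 - ρ₂ 0 1) = 0 := by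
    have hI : Complex.I * (h₂ * ((starRingEnd ℂ) (ρ₁ 0 1) - (starRingEnd ℂ) (ρ₂ 0 1)) -
        (starRingEnd ℂ) h₂ * (ρ₁ 0 1 - ρ₂ 0 1)) = 0 := by
      linear_combination e00₂ - e00₁
    rcases mul_eq_zero.mp hI with h | h
    · exact absurd h Complex.I_ne_zero
    · exact h
  have EqB : -Complex.I * (((h₁ : ℂ) - (h₃ : ℂ)) * (ρ₁ 0 1 - ρ₂ 0 1) -
        2 * h₂ * (ρ₁ 0 0 - ρ₂ 0 0)) +
      (c₁ * (starRingEnd ℂ) c₂ + a₁ * (starRingEnd ℂ) a₂ -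
        (1 / 2 : ℂ) * ((starRingEnd ℂ) c₁ * c₁ + (starRingEnd ℂ) a₁ * a₁ +
          (starRingEnd ℂ) c₂ * c₂ + (starRingEnd ℂ) a₂ * a₂)) * (ρ₁ 0 1 - ρ₂ 0 1) = 0 := by
    linear_combination e01₁ - e01₂
  by_cases hs : ρ₁ 0 1 = ρ₂ 0 1
  · -- off-diagonal difference zero forces diagonal difference zero, contradicting hne
    exfalso
    have hI : (2 * Complex.I * h₂) * (ρ₁ 0 0 - ρ₂ 0 0) = 0 := by
      rw [hs] at EqB
      linear_combination EqB
    have hd : ρ₁ 0 0 - ρ₂ 0 0 = 0 := by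
      rcases mul_eq_zero.mp hI with h | h
      · rcases mul_eq_zero.mp h with h' | h'
        · rcases mul_eq_zero.mp h' with h'' | h''
          · norm_num at h''
          · exact absurd h'' Complex.I_ne_zero
        · exact absurd h' hh₂
      · exact h
    apply hne
    have h00 : ρ₁ 0 0 = ρ₂ 0 0 := sub_eq_zero.mp hd
    ext i j
    fin_cases i <;> fin_cases j <;>
      simp only [Fin.zero_eta, Fin.mk_one, Fin.isValue]
    · exact h00
    · exact hs
    · rw [herm₁, herm₂, hs]
    · rw [q₁, q₂, h00]
  · -- s ≠ 0 : extract Re μ = 0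
    have hsne : ρ₁ 0 1 - ρ₂ 0 1 ≠ 0 := sub_ne_zero.mpr hs
    have hcsne : (starRingEnd ℂ) (ρ₁ 0 1) - (starRingEnd ℂ) (ρ₂ 0 1) ≠ 0 := by
      intro h
      apply hsne
      have := congrArg (starRingEnd ℂ) h
      simpa [map_sub, sub_eq_zero] using this
    -- conjugate of EqB
    have EqBc := congrArg (starRingEnd ℂ) EqB
    simp only [map_add, map_sub, _root_.map_mul, map_neg, map_zero, _root_.map_one, map_ofNat,
      map_div₀, Complex.conj_conj, Complex.conj_I, Complex.conj_ofReal] at EqBc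
    rw [hre₁, hre₂] at EqBc
    have hsum : ((c₁ * (starRingEnd ℂ) c₂ + a₁ * (starRingEnd ℂ) a₂ +
          (starRingEnd ℂ) c₁ * c₂ + (starRingEnd ℂ) a₁ * a₂) -
        ((starRingEnd ℂ) c₁ * c₁ + (starRingEnd ℂ) a₁ * a₁ +
          (starRingEnd ℂ) c₂ * c₂ + (starRingEnd ℂ) a₂ * a₂)) *
        ((ρ₁ 0 1 - ρ₂ 0 1) * ((starRingEnd ℂ) (ρ₁ 0 1) - (starRingEnd ℂ) (ρ₂ 0 1))) = 0 := by
      linear_combination ((starRingEnd ℂ) (ρ₁ 0 1) - (starRingEnd ℂ) (ρ₂ 0 1)) * EqB +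
        (ρ₁ 0 1 - ρ₂ 0 1) * EqBc -
        2 * Complex.I * (ρ₁ 0 0 - ρ₂ 0 0) * EqA
    have hmu : (c₁ * (starRingEnd ℂ) c₂ + a₁ * (starRingEnd ℂ) a₂ +
          (starRingEnd ℂ) c₁ * c₂ + (starRingEnd ℂ) a₁ * a₂) -
        ((starRingEnd ℂ) c₁ * c₁ + (starRingEnd ℂ) a₁ * a₁ +
          (starRingEnd ℂ) c₂ * c₂ + (starRingEnd ℂ) a₂ * a₂) = 0 := by
      rcases mul_eq_zero.mp hsum with h | h
      · exact h
      · exact absurd h (mul_ne_zero hsne hcsne)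
    have hfin : (c₁ - c₂) * (starRingEnd ℂ) (c₁ - c₂) +
        (a₁ - a₂) * (starRingEnd ℂ) (a₁ - a₂) = 0 := by
      simp only [map_sub]
      linear_combination -hmu
    rw [Complex.mul_conj, Complex.mul_conj] at hfin
    have hR : Complex.normSq (c₁ - c₂) + Complex.normSq (a₁ - a₂) = 0 := by
      exact_mod_cast hfin
    have hc : Complex.normSq (c₁ - c₂) = 0 := by
      nlinarith [Complex.normSq_nonneg (c₁ - c₂), Complex.normSq_nonneg (a₁ - a₂)]
    have ha : Complex.normSq (a₁ - a₂) = 0 := by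
      nlinarith [Complex.normSq_nonneg (c₁ - c₂), Complex.normSq_nonneg (a₁ - a₂)]
    exact ⟨sub_eq_zero.mp (Complex.normSq_eq_zero.mp ha),
      sub_eq_zero.mp (Complex.normSq_eq_zero.mp hc)⟩
end
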